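/- arXiv:1610.06144 — 6 statements merged into one kernel-verified Lean document; each statement's English description precedes it below -/
import Mathlib

section
/- Let n₁, n₂ be natural numbers, and let K = {y ∈ [0, 1/2]^{n₂} : Σ_{i=1}^{n₂} y_i ≤ n₁/2}. Then for every y ∈ K, Σ_{i=1}^{n₂} 1/(1 − y_i) ≤ n₁ + n₂. -/
open Finset

/-- Claim 3: if `y ∈ [0,1/2]^{n₂}` with `∑ yᵢ ≤ n₁/2`, then
`∑ 1/(1 - yᵢ) ≤ n₁ + n₂`. -/
theorem sum_inv_one_sub_le (n₁ n₂ : ℕ) (y : Fin n₂ → ℝ)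
    (hy : ∀ i, y i ∈ Set.Icc (0 : ℝ) (1 / 2))
    (hsum : ∑ i, y i ≤ (n₁ : ℝ) / 2) :
    ∑ i, 1 / (1 - y i) ≤ (n₁ : ℝ) + (n₂ : ℝ) := by
  have key : ∀ i, 1 / (1 - y i) ≤ 1 + 2 * y i := by
    intro i
    obtain ⟨h0, h1⟩ := hy i
    have hpos : 0 < 1 - y i := by linarith
    rw [div_le_iff₀ hpos]
    nlinarith
  calc ∑ i, 1 / (1 - y i) ≤ ∑ i, (1 + 2 * y i) := Finset.sum_le_sum fun i _ => key i
    _ = (n₂ : ℝ) + 2 * ∑ i, y i := by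
        rw [Finset.sum_add_distrib, ← Finset.mul_sum]
        simp
    _ ≤ (n₁ : ℝ) + (n₂ : ℝ) := by linarith
end

section
/- Let W be a finite set with a uniformly random linear order σ, let G be a graph on a vertex set containing W, and for v ∈ W let r(v) be a positive integer. Let A be the (random) set of v ∈ W such that fewer than r(v) elements of N_G(v) ∩ W precede v in σ. Then the probability that v ∈ A equals min{1, r(v)/(1 + |N_G(v) ∩ W|)}, and hence E[|A|] = Σ_{v ∈ W} min{1, r(v)/(1 + |N_G(v) ∩ W|)}. -/
open Finset
open scoped Classical

variable {V : Type*}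

/-- One step of the bootstrap percolation process in `G` with thresholds `φ`. -/
noncomputable def percStep [Fintype V] (G : SimpleGraph V) (φ : V → ℝ) (A : Finset V) :
    Finset V :=
  A ∪ Finset.univ.filter fun v => φ v ≤ ((A.filter fun u => G.Adj v u).card : ℝ)

/-- `A` is a contagious set for `G` with respect to thresholds `φ`. -/
def Contagious [Fintype V] (G : SimpleGraph V) (φ : V → ℝ) (A : Finset V) : Prop :=
  ∃ k, (percStep G φ)^[k] A = Finset.univ

/-- The final infected set `H_{φ,G}(A)`. -/
noncomputable def percClosure [Fintype V] (G : SimpleGraph V) (φ : V → ℝ) (A : Finset V) :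
    Finset V :=
  (percStep G φ)^[Fintype.card V] A

/-- `h_ρ(G)`: minimum size of a contagious set for ratio `ρ`. -/
noncomputable def minContagious [Fintype V] (G : SimpleGraph V) (ρ : ℝ) : ℕ :=
  sInf {k | ∃ A : Finset V, A.card = k ∧ Contagious G (fun v => ρ * (G.degree v : ℝ)) A}

set_option linter.unusedSectionVars false
set_option linter.unusedVariables false

section Pick
variable {α β : Type*} [LinearOrder β]

noncomputable def pickMin (σ : α ≃ β) (s : Finset α) (h : s.Nonempty) : α :=
  σ.symm ((s.image σ).min' (h.image σ))

noncomputable def pickMax (σ : α ≃ β) (s : Finset α) (h : s.Nonempty) : α :=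
  σ.symm ((s.image σ).max' (h.image σ))

lemma pickMin_mem (σ : α ≃ β) (s : Finset α) (h : s.Nonempty) : pickMin σ s h ∈ s := by
  obtain ⟨w, hw, hw'⟩ := Finset.mem_image.1 ((s.image σ).min'_mem (h.image σ))
  rw [pickMin, ← hw', Equiv.symm_apply_apply]; exact hw

lemma pickMax_mem (σ : α ≃ β) (s : Finset α) (h : s.Nonempty) : pickMax σ s h ∈ s := by
  obtain ⟨w, hw, hw'⟩ := Finset.mem_image.1 ((s.image σ).max'_mem (h.image σ))
  rw [pickMax, ← hw', Equiv.symm_apply_apply]; exact hw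

lemma pickMin_le (σ : α ≃ β) (s : Finset α) (h : s.Nonempty) {w : α} (hw : w ∈ s) :
    σ (pickMin σ s h) ≤ σ w := by
  rw [pickMin, Equiv.apply_symm_apply]
  exact Finset.min'_le _ _ (Finset.mem_image_of_mem σ hw)

lemma le_pickMax (σ : α ≃ β) (s : Finset α) (h : s.Nonempty) {w : α} (hw : w ∈ s) :
    σ w ≤ σ (pickMax σ s h) := by
  rw [pickMax, Equiv.apply_symm_apply]
  exact Finset.le_max' _ _ (Finset.mem_image_of_mem σ hw)

lemma pickMin_eq (σ : α ≃ β) (s : Finset α) (h : s.Nonempty) {w : α} (hw : w ∈ s)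
    (hmin : ∀ x ∈ s, σ w ≤ σ x) : pickMin σ s h = w :=
  σ.injective (le_antisymm (pickMin_le σ s h hw) (hmin _ (pickMin_mem σ s h)))

lemma pickMax_eq (σ : α ≃ β) (s : Finset α) (h : s.Nonempty) {w : α} (hw : w ∈ s)
    (hmax : ∀ x ∈ s, σ x ≤ σ w) : pickMax σ s h = w :=
  σ.injective (le_antisymm (hmax _ (pickMax_mem σ s h)) (le_pickMax σ s h hw))

end Pick

section Core
variable {α β : Type*} [DecidableEq α] [LinearOrder β]

/-- number of elements of `N` preceding `v` under `σ`. -/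
noncomputable def rnk (v : α) (N : Finset α) (σ : α ≃ β) : ℕ :=
  (N.filter fun u => σ u < σ v).card

lemma rnk_le (v : α) (N : Finset α) (σ : α ≃ β) : rnk v N σ ≤ N.card :=
  Finset.card_filter_le _ _

lemma rnk_add (v : α) {N : Finset α} (hvN : v ∉ N) (σ : α ≃ β) :
    rnk v N σ + (N.filter fun u => σ v < σ u).card = N.card := by
  have h : (N.filter fun u => σ v < σ u) = N.filter (fun u => ¬ σ u < σ v) := by
    apply Finset.filter_congr
    intro u hu
    have hne : σ u ≠ σ v := fun h => hvN (by rwa [σ.injective h] at hu)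
    constructor
    · exact fun h' => lt_asymm h'
    · exact fun h' => lt_of_le_of_ne (not_lt.1 h') (Ne.symm hne)
  rw [rnk, h]
  exact Finset.card_filter_add_card_filter_not _

variable [Fintype α] [Fintype β] [DecidableEq β]

lemma filter_after_swapMin {v : α} {N : Finset α} (hvN : v ∉ N) (σ : α ≃ β)
    (hA : (N.filter fun u => σ v < σ u).Nonempty) :
    (N.filter fun u => ((Equiv.swap v (pickMin σ _ hA)).trans σ) u
        < ((Equiv.swap v (pickMin σ _ hA)).trans σ) v)
      = insert (pickMin σ _ hA) (N.filter fun u => σ u < σ v) := by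
  set u₀ := pickMin σ _ hA with hu₀
  have hmem := pickMin_mem σ _ hA
  have hu₀N : u₀ ∈ N := (Finset.mem_filter.1 hmem).1
  have hvu : σ v < σ u₀ := (Finset.mem_filter.1 hmem).2
  have hvne : v ≠ u₀ := fun h => hvN (h ▸ hu₀N)
  ext u
  simp only [Finset.mem_filter, Finset.mem_insert, Equiv.trans_apply, Equiv.swap_apply_left]
  constructor
  · rintro ⟨huN, hlt⟩
    by_cases h : u = u₀
    · exact Or.inl h
    · right
      have huv : u ≠ v := fun h' => hvN (h' ▸ huN)
      rw [Equiv.swap_apply_of_ne_of_ne huv h] at hlt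
      refine ⟨huN, ?_⟩
      by_contra hcon
      have hne : σ u ≠ σ v := fun he => huv (σ.injective he)
      have h1 : σ v < σ u := lt_of_le_of_ne (not_lt.1 hcon) (Ne.symm hne)
      have h2 := pickMin_le σ _ hA (Finset.mem_filter.2 ⟨huN, h1⟩)
      rw [← hu₀] at h2
      exact absurd hlt (not_lt.2 h2)
  · rintro (rfl | hu)
    · refine ⟨hu₀N, ?_⟩
      rw [Equiv.swap_apply_right]
      exact hvu
    · obtain ⟨huN, hlt⟩ := hu
      have huv : u ≠ v := fun h' => hvN (h' ▸ huN)
      have huu₀ : u ≠ u₀ := fun h' => absurd (h' ▸ hlt) (not_lt.2 (le_of_lt hvu))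
      rw [Equiv.swap_apply_of_ne_of_ne huv huu₀]
      exact ⟨huN, lt_trans hlt hvu⟩

lemma filter_after_swapMax {v : α} {N : Finset α} (hvN : v ∉ N) (τ : α ≃ β)
    (hB : (N.filter fun u => τ u < τ v).Nonempty) :
    (N.filter fun u => ((Equiv.swap v (pickMax τ _ hB)).trans τ) u
        < ((Equiv.swap v (pickMax τ _ hB)).trans τ) v)
      = (N.filter fun u => τ u < τ v).erase (pickMax τ _ hB) := by
  set m₀ := pickMax τ _ hB with hm₀
  have hmem := pickMax_mem τ _ hB
  have hm₀N : m₀ ∈ N := (Finset.mem_filter.1 hmem).1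
  have hmv : τ m₀ < τ v := (Finset.mem_filter.1 hmem).2
  have hvne : v ≠ m₀ := fun h => hvN (h ▸ hm₀N)
  ext u
  simp only [Finset.mem_filter, Finset.mem_erase, Equiv.trans_apply, Equiv.swap_apply_left]
  constructor
  · rintro ⟨huN, hlt⟩
    by_cases h : u = m₀
    · subst h
      rw [Equiv.swap_apply_right] at hlt
      exact absurd hlt (not_lt.2 (le_of_lt hmv))
    · have huv : u ≠ v := fun h' => hvN (h' ▸ huN)
      rw [Equiv.swap_apply_of_ne_of_ne huv h] at hlt
      exact ⟨h, huN, lt_trans hlt hmv⟩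
  · rintro ⟨hne, huN, hlt⟩
    have huv : u ≠ v := fun h' => hvN (h' ▸ huN)
    rw [Equiv.swap_apply_of_ne_of_ne huv hne]
    refine ⟨huN, ?_⟩
    have h1 := le_pickMax τ _ hB (Finset.mem_filter.2 ⟨huN, hlt⟩)
    rw [← hm₀] at h1
    exact lt_of_le_of_ne h1 (fun he => hne (τ.injective he))

noncomputable def stepF (v : α) (N : Finset α) (σ : α ≃ β) : α ≃ β :=
  if h : (N.filter fun u => σ v < σ u).Nonempty
  then (Equiv.swap v (pickMin σ _ h)).trans σ else σ

noncomputable def stepB (v : α) (N : Finset α) (τ : α ≃ β) : α ≃ β :=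
  if h : (N.filter fun u => τ u < τ v).Nonempty
  then (Equiv.swap v (pickMax τ _ h)).trans τ else τ

lemma rnk_stepF {v : α} {N : Finset α} (hvN : v ∉ N) (σ : α ≃ β)
    (h : (N.filter fun u => σ v < σ u).Nonempty) :
    rnk v N (stepF v N σ) = rnk v N σ + 1 := by
  rw [stepF, dif_pos h, rnk, filter_after_swapMin hvN σ h,
    Finset.card_insert_of_notMem, rnk]
  intro hmem
  have h1 := (Finset.mem_filter.1 (pickMin_mem σ _ h)).2
  have h2 := (Finset.mem_filter.1 hmem).2
  exact absurd h1 (not_lt.2 (le_of_lt h2))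

lemma rnk_stepB {v : α} {N : Finset α} (hvN : v ∉ N) (τ : α ≃ β)
    (h : (N.filter fun u => τ u < τ v).Nonempty) :
    rnk v N (stepB v N τ) + 1 = rnk v N τ := by
  rw [stepB, dif_pos h, rnk, filter_after_swapMax hvN τ h,
    Finset.card_erase_of_mem (pickMax_mem τ _ h), rnk]
  have : 0 < (N.filter fun u => τ u < τ v).card := Finset.card_pos.2 h
  omega

lemma stepB_stepF {v : α} {N : Finset α} (hvN : v ∉ N) (σ : α ≃ β)
    (h : (N.filter fun u => σ v < σ u).Nonempty) :
    stepB v N (stepF v N σ) = σ := by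
  rw [stepF, dif_pos h]
  set u₀ := pickMin σ _ h with hu₀def
  set τ := (Equiv.swap v u₀).trans σ with hτdef
  have hmem := pickMin_mem σ _ h
  have hu₀N : u₀ ∈ N := (Finset.mem_filter.1 hmem).1
  have hvu : σ v < σ u₀ := (Finset.mem_filter.1 hmem).2
  have hvne : v ≠ u₀ := fun h' => hvN (h' ▸ hu₀N)
  have hfilter : (N.filter fun u => τ u < τ v)
      = insert u₀ (N.filter fun u => σ u < σ v) :=
    filter_after_swapMin hvN σ h
  have hτu₀ : τ u₀ = σ v := by
    simp [hτdef, Equiv.swap_apply_right]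
  have hB : (N.filter fun u => τ u < τ v).Nonempty := by
    rw [hfilter]; exact Finset.insert_nonempty _ _
  rw [stepB, dif_pos hB]
  have hpm : pickMax τ _ hB = u₀ := by
    apply pickMax_eq
    · rw [hfilter]; exact Finset.mem_insert_self _ _
    · intro x hx
      rw [hfilter] at hx
      rcases Finset.mem_insert.1 hx with rfl | hx
      · exact le_rfl
      · obtain ⟨hxN, hlt⟩ := Finset.mem_filter.1 hx
        have hxv : x ≠ v := fun h' => hvN (h' ▸ hxN)
        have hxu₀ : x ≠ u₀ := fun h' => absurd (h' ▸ hlt) (not_lt.2 (le_of_lt hvu))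
        have hτx : τ x = σ x := by
          simp [hτdef, Equiv.swap_apply_of_ne_of_ne hxv hxu₀]
        rw [hτx, hτu₀]
        exact le_of_lt hlt
  rw [hpm]
  ext x
  simp [hτdef, Equiv.swap_apply_self]

lemma stepF_stepB {v : α} {N : Finset α} (hvN : v ∉ N) (τ : α ≃ β)
    (h : (N.filter fun u => τ u < τ v).Nonempty) :
    stepF v N (stepB v N τ) = τ := by
  rw [stepB, dif_pos h]
  set m₀ := pickMax τ _ h with hm₀def
  set ρ := (Equiv.swap v m₀).trans τ with hρdef
  have hmem := pickMax_mem τ _ h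
  have hm₀N : m₀ ∈ N := (Finset.mem_filter.1 hmem).1
  have hmv : τ m₀ < τ v := (Finset.mem_filter.1 hmem).2
  have hvne : v ≠ m₀ := fun h' => hvN (h' ▸ hm₀N)
  have hρv : ρ v = τ m₀ := by
    simp [hρdef, Equiv.swap_apply_left]
  have hρm₀ : ρ m₀ = τ v := by
    simp [hρdef, Equiv.swap_apply_right]
  have hA : (N.filter fun u => ρ v < ρ u).Nonempty := by
    refine ⟨m₀, Finset.mem_filter.2 ⟨hm₀N, ?_⟩⟩
    rw [hρv, hρm₀]; exact hmv
  rw [stepF, dif_pos hA]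
  have hpm : pickMin ρ _ hA = m₀ := by
    apply pickMin_eq
    · refine Finset.mem_filter.2 ⟨hm₀N, ?_⟩
      rw [hρv, hρm₀]; exact hmv
    · intro x hx
      obtain ⟨hxN, hlt⟩ := Finset.mem_filter.1 hx
      rcases eq_or_ne x m₀ with rfl | hxm₀
      · exact le_rfl
      · have hxv : x ≠ v := fun h' => hvN (h' ▸ hxN)
        have hρx : ρ x = τ x := by
          simp [hρdef, Equiv.swap_apply_of_ne_of_ne hxv hxm₀]
        rw [hρm₀, hρx]
        rw [hρv, hρx] at hlt
        by_contra hcon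
        have hxB : x ∈ N.filter fun u => τ u < τ v :=
          Finset.mem_filter.2 ⟨hxN, not_le.1 hcon⟩
        have h1 := le_pickMax τ _ h hxB
        rw [← hm₀def] at h1
        exact absurd hlt (not_lt.2 h1)
  rw [hpm]
  ext x
  simp [hρdef, Equiv.swap_apply_self]

lemma rnk_step_card {v : α} {N : Finset α} (hvN : v ∉ N) {k : ℕ} (hk : k < N.card) :
    (Finset.univ.filter fun σ : α ≃ β => rnk v N σ = k).card
      = (Finset.univ.filter fun σ : α ≃ β => rnk v N σ = k + 1).card := by
  have hAne : ∀ σ : α ≃ β, rnk v N σ = k → (N.filter fun u => σ v < σ u).Nonempty := by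
    intro σ hσ
    rw [← Finset.card_pos]
    have := rnk_add v hvN σ
    omega
  have hBne : ∀ σ : α ≃ β, rnk v N σ = k + 1 → (N.filter fun u => σ u < σ v).Nonempty := by
    intro σ hσ
    rw [← Finset.card_pos]
    rw [rnk] at hσ
    omega
  refine Finset.card_bij' (fun σ _ => stepF v N σ) (fun τ _ => stepB v N τ) ?_ ?_ ?_ ?_
  · intro σ hσ
    have hσk := (Finset.mem_filter.1 hσ).2
    refine Finset.mem_filter.2 ⟨Finset.mem_univ _, ?_⟩
    rw [rnk_stepF hvN σ (hAne σ hσk), hσk]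
  · intro τ hτ
    have hτk := (Finset.mem_filter.1 hτ).2
    refine Finset.mem_filter.2 ⟨Finset.mem_univ _, ?_⟩
    show rnk v N (stepB v N τ) = k
    have := rnk_stepB hvN τ (hBne τ hτk)
    omega
  · intro σ hσ
    exact stepB_stepF hvN σ (hAne σ (Finset.mem_filter.1 hσ).2)
  · intro τ hτ
    exact stepF_stepB hvN τ (hBne τ (Finset.mem_filter.1 hτ).2)

lemma rnk_const_card {v : α} {N : Finset α} (hvN : v ∉ N) :
    ∀ k ≤ N.card,
    (Finset.univ.filter fun σ : α ≃ β => rnk v N σ = k).card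
      = (Finset.univ.filter fun σ : α ≃ β => rnk v N σ = 0).card := by
  intro k
  induction k with
  | zero => intro _; rfl
  | succ n ih =>
    intro h
    rw [← rnk_step_card hvN (by omega : n < N.card), ih (by omega)]

lemma rnk_count {v : α} {N : Finset α} (hvN : v ∉ N) (m : ℕ) (hm : m ≤ N.card + 1) :
    (Finset.univ.filter fun σ : α ≃ β => rnk v N σ < m).card
      = m * (Finset.univ.filter fun σ : α ≃ β => rnk v N σ = 0).card := by
  have h1 : (Finset.univ.filter fun σ : α ≃ β => rnk v N σ < m).card
      = ∑ kk ∈ Finset.range m,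
          ((Finset.univ.filter fun σ : α ≃ β => rnk v N σ < m).filter
            (fun σ => rnk v N σ = kk)).card :=
    Finset.card_eq_sum_card_fiberwise
      (fun σ hσ => Finset.mem_range.2 (Finset.mem_filter.1 hσ).2)
  have h2 : ∀ kk ∈ Finset.range m,
      ((Finset.univ.filter fun σ : α ≃ β => rnk v N σ < m).filter
        (fun σ => rnk v N σ = kk)).card
      = (Finset.univ.filter fun σ : α ≃ β => rnk v N σ = 0).card := by
    intro kk hkk
    have hkk' := Finset.mem_range.1 hkk
    have he : ((Finset.univ.filter fun σ : α ≃ β => rnk v N σ < m).filter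
        (fun σ => rnk v N σ = kk))
        = Finset.univ.filter fun σ : α ≃ β => rnk v N σ = kk := by
      ext σ
      simp only [Finset.mem_filter, Finset.mem_univ, true_and]
      constructor
      · rintro ⟨_, h⟩; exact h
      · intro h; exact ⟨by omega, h⟩
    rw [he]
    exact rnk_const_card hvN kk (by omega)
  rw [h1, Finset.sum_congr rfl h2, Finset.sum_const, Finset.card_range, smul_eq_mul]

lemma rnk_total {v : α} {N : Finset α} (hvN : v ∉ N) :
    Fintype.card (α ≃ β)
      = (N.card + 1) * (Finset.univ.filter fun σ : α ≃ β => rnk v N σ = 0).card := by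
  have h := rnk_count (β := β) hvN (N.card + 1) le_rfl
  rw [Finset.filter_true_of_mem
    (fun σ _ => Nat.lt_succ_of_le (rnk_le v N σ))] at h
  rw [← Finset.card_univ, h]

lemma rnk_prob {v : α} {N : Finset α} (hvN : v ∉ N) (r : ℕ) [Nonempty (α ≃ β)] :
    ((Finset.univ.filter fun σ : α ≃ β => rnk v N σ < r).card : ℝ)
        / (Fintype.card (α ≃ β) : ℝ)
      = min 1 ((r : ℝ) / ((N.card : ℝ) + 1)) := by
  have hd1 : (0 : ℝ) < (N.card : ℝ) + 1 := by positivity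
  have hpos : 0 < Fintype.card (α ≃ β) := Fintype.card_pos
  rcases le_total r (N.card + 1) with h | h
  · have htot := rnk_total (β := β) (v := v) hvN
    have hc0 : 0 < (Finset.univ.filter fun σ : α ≃ β => rnk v N σ = 0).card := by
      rw [htot] at hpos
      exact Nat.pos_of_ne_zero fun h0 => by simp [h0] at hpos
    have hc0R : ((Finset.univ.filter fun σ : α ≃ β => rnk v N σ = 0).card : ℝ) ≠ 0 := by
      exact_mod_cast hc0.ne'
    have hle : (r : ℝ) / ((N.card : ℝ) + 1) ≤ 1 := by
      rw [div_le_one hd1]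
      exact_mod_cast h
    rw [rnk_count (β := β) hvN r h, htot]
    push_cast
    rw [mul_div_mul_right _ _ hc0R]
    exact (min_eq_right hle).symm
  · have hfil : (Finset.univ.filter fun σ : α ≃ β => rnk v N σ < r) = Finset.univ :=
      Finset.filter_true_of_mem fun σ _ => by have := rnk_le v N σ; omega
    have hge : (1 : ℝ) ≤ (r : ℝ) / ((N.card : ℝ) + 1) := by
      rw [le_div_iff₀ hd1, one_mul]
      exact_mod_cast h
    rw [hfil, Finset.card_univ, div_self (by exact_mod_cast hpos.ne' : (Fintype.card (α ≃ β) : ℝ) ≠ 0)]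
    exact (min_eq_left hge).symm

end Core

/-- for a uniformly random linear order `σ` of `W`, the probability that
fewer than `r(v)` members of `N(v) ∩ W` precede `v` is `min {1, r(v)/(1+|N(v)∩W|)}`,
and the expected number of such vertices is the corresponding sum. -/
theorem random_order_selection_probability [Fintype V] (G : SimpleGraph V)
    (W : Finset V) (r : V → ℕ) (hr : ∀ v, 0 < r v) :
    (∀ v : ↥W,
      ((Finset.univ.filter fun σ : ↥W ≃ Fin W.card =>
          (Finset.univ.filter fun u : ↥W => G.Adj ↑v ↑u ∧ σ u < σ v).card < r ↑v).card : ℝ) /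
        (Fintype.card (↥W ≃ Fin W.card) : ℝ) =
      min 1 ((r ↑v : ℝ) / (1 + ((Finset.univ.filter fun u : ↥W => G.Adj ↑v ↑u).card : ℝ)))) ∧
    (∑ σ : ↥W ≃ Fin W.card,
        (((Finset.univ.filter fun v : ↥W =>
            (Finset.univ.filter fun u : ↥W => G.Adj ↑v ↑u ∧ σ u < σ v).card < r ↑v).card : ℝ))) /
      (Fintype.card (↥W ≃ Fin W.card) : ℝ) =
    ∑ v : ↥W,
      min 1 ((r ↑v : ℝ) / (1 + ((Finset.univ.filter fun u : ↥W => G.Adj ↑v ↑u).card : ℝ))) := by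
  have hNE : Nonempty (↥W ≃ Fin W.card) := ⟨Fintype.equivFinOfCardEq (Fintype.card_coe W)⟩
  have key : ∀ v : ↥W,
      ((Finset.univ.filter fun σ : ↥W ≃ Fin W.card =>
          (Finset.univ.filter fun u : ↥W => G.Adj ↑v ↑u ∧ σ u < σ v).card < r ↑v).card : ℝ) /
        (Fintype.card (↥W ≃ Fin W.card) : ℝ) =
      min 1 ((r ↑v : ℝ) / (1 + ((Finset.univ.filter fun u : ↥W => G.Adj ↑v ↑u).card : ℝ))) := by
    intro v
    set N : Finset ↥W := Finset.univ.filter fun u : ↥W => G.Adj ↑v ↑u with hNdef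
    have hvN : v ∉ N := by
      rw [hNdef]
      simp [SimpleGraph.irrefl]
    have hN : ∀ σ : ↥W ≃ Fin W.card,
        (Finset.univ.filter fun u : ↥W => G.Adj ↑v ↑u ∧ σ u < σ v)
          = N.filter fun u => σ u < σ v := by
      intro σ
      rw [hNdef, Finset.filter_filter]
    simp only [hN]
    have h := rnk_prob (β := Fin W.card) hvN (r ↑v)
    unfold rnk at h
    rw [add_comm (1 : ℝ)]
    exact h
  refine ⟨key, ?_⟩
  have hsum : ∑ σ : ↥W ≃ Fin W.card,
      (((Finset.univ.filter fun v : ↥W =>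
          (Finset.univ.filter fun u : ↥W => G.Adj ↑v ↑u ∧ σ u < σ v).card < r ↑v).card : ℝ))
      = ∑ v : ↥W, ((Finset.univ.filter fun σ : ↥W ≃ Fin W.card =>
          (Finset.univ.filter fun u : ↥W => G.Adj ↑v ↑u ∧ σ u < σ v).card < r ↑v).card : ℝ) := by
    simp_rw [Finset.card_filter, Nat.cast_sum]
    rw [Finset.sum_comm]
  rw [hsum, Finset.sum_div]
  exact Finset.sum_congr rfl fun v _ => key v
end

section
/- For every ε > 0 there exists ρ > 0 and a connected graph G on n vertices such that h_ρ(G) ≠ 1 and h_ρ(G) ≥ (2 − ε)ρn. In particular, for n = ⌊1/ρ⌋ + 2, every contagious set for the complete graph K_n with respect to ρ has size at least 2, and 2 ≥ 2ρn − 4ρ. -/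
open Finset
open scoped Classical

variable {V : Type*}

/-! Proof idea: take `ρ = 1/m` and `G = K_{m+2}`. Every threshold is `(m+1)/m > 1`, so a single
infected vertex never spreads and `h_ρ(K_{m+2}) ≥ 2`; and `(2 - ε)(m+2)/m ≤ 2` once `εm ≥ 4`. -/

section Percolation

variable [Fintype V] {G : SimpleGraph V} {φ : V → ℝ} {A : Finset V}

theorem percStep_eq_self (h : ∀ v, (A.card : ℝ) < φ v) : percStep G φ A = A := by
  refine union_eq_left.mpr fun v hv => absurd (mem_filter.mp hv).2 (not_le.mpr ?_)
  exact lt_of_le_of_lt (by exact_mod_cast card_filter_le _ _) (h v)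

theorem Contagious.eq_univ_of_card_lt (hA : Contagious G φ A) (h : ∀ v, (A.card : ℝ) < φ v) :
    A = univ := by
  obtain ⟨k, hk⟩ := hA
  rwa [Function.iterate_fixed (percStep_eq_self h)] at hk

theorem contagious_univ : Contagious G φ univ := ⟨0, rfl⟩

theorem le_minContagious {ρ : ℝ} {k : ℕ}
    (h : ∀ A, Contagious G (fun v => ρ * (G.degree v : ℝ)) A → k ≤ A.card) :
    k ≤ minContagious G ρ := by
  refine le_csInf ⟨_, univ, rfl, contagious_univ⟩ ?_
  rintro _ ⟨A, rfl, hA⟩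
  exact h A hA

end Percolation

theorem degree_top_eq [Fintype V] (v : V) [Fintype ((⊤ : SimpleGraph V).neighborSet v)] :
    (⊤ : SimpleGraph V).degree v = Fintype.card V - 1 := by
  convert SimpleGraph.complete_graph_degree v

theorem two_le_minContagious_top [Fintype V] {ρ : ℝ} (hV : 2 ≤ Fintype.card V)
    (hρ : 1 < ρ * ((Fintype.card V : ℝ) - 1)) : 2 ≤ minContagious (⊤ : SimpleGraph V) ρ := by
  refine le_minContagious fun A hA => ?_
  by_contra! hsmall
  have hcard := congrArg card (hA.eq_univ_of_card_lt fun v => ?_)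
  · rw [card_univ] at hcard
    omega
  rw [degree_top_eq, Nat.cast_pred (by omega)]
  exact lt_of_le_of_lt (by exact_mod_cast Nat.le_of_lt_succ hsmall) hρ

theorem two_sub_mul_inv_mul_le_two {ε m : ℝ} (hε : 0 < ε) (hm : 4 ≤ ε * m) :
    (2 - ε) * m⁻¹ * (m + 2) ≤ 2 := by
  have hm0 : 0 < m := pos_of_mul_pos_right (by linarith) hε.le
  rw [mul_assoc, ← div_eq_inv_mul, mul_div_assoc', div_le_iff₀ hm0]
  nlinarith

/-- Observation 1: for every `ε > 0` there exist `ρ > 0` and a connected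
graph `G` on `n` vertices with `h_ρ(G) ≠ 1` and `h_ρ(G) ≥ (2 - ε)ρn`. -/
theorem exists_graph_min_contagious_ge_two_sub_eps :
    ∀ ε : ℝ, 0 < ε → ∃ ρ : ℝ, 0 < ρ ∧ ∃ (n : ℕ) (G : SimpleGraph (Fin n)),
      G.Connected ∧ minContagious G ρ ≠ 1 ∧
        (2 - ε) * ρ * (n : ℝ) ≤ (minContagious G ρ : ℝ) := by
  intro ε hε
  set m := ⌈4 / ε⌉₊
  have hm : 4 ≤ ε * m := by
    rw [← div_le_iff₀' hε]
    exact Nat.le_ceil _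
  have hm0 : (0 : ℝ) < m := pos_of_mul_pos_right (by linarith) hε.le
  have htwo : 2 ≤ minContagious (⊤ : SimpleGraph (Fin (m + 2))) (m : ℝ)⁻¹ := by
    refine two_le_minContagious_top (by simp) ?_
    rw [Fintype.card_fin, Nat.cast_add, Nat.cast_two, inv_mul_eq_div, lt_div_iff₀ hm0]
    linarith
  refine ⟨(m : ℝ)⁻¹, inv_pos.mpr hm0, m + 2, ⊤, SimpleGraph.connected_top, by omega, ?_⟩
  calc (2 - ε) * (m : ℝ)⁻¹ * ((m + 2 : ℕ) : ℝ)
      ≤ 2 := by push_cast; exact two_sub_mul_inv_mul_le_two hε hm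
    _ ≤ _ := by exact_mod_cast htwo
end

section
/- Let d ≥ 2 and let G be the balanced d-regular tree of depth 2 with root v: the root has d children (tier T₂), and each child has d − 1 children (tier T₃), so n = 1 + d². Let ρ ∈ (0,1] with d = ⌊1/ρ⌋ + 1. Then h_ρ(G) = d. -/
open Finset
open scoped Classical

variable {V : Type*}

/-- The balanced `d`-regular tree of depth 2: root `none`, tier-2 vertices
`some (i, none)`, tier-3 leaves `some (i, some j)`. It has `1 + d²` vertices. -/
def balancedTree (d : ℕ) : SimpleGraph (Option (Fin d × Option (Fin (d - 1)))) :=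
  SimpleGraph.fromRel fun a b =>
    (a = none ∧ ∃ i : Fin d, b = some (i, none)) ∨
    (∃ (i : Fin d) (j : Fin (d - 1)), a = some (i, none) ∧ b = some (i, some j))



lemma bt_adj_root (d : ℕ) (b) : (balancedTree d).Adj none b ↔ ∃ i : Fin d, b = some (i, none) := by
  simp only [balancedTree, SimpleGraph.fromRel_adj]
  aesop

lemma bt_adj_mid (d : ℕ) (i : Fin d) (b) :
    (balancedTree d).Adj (some (i, none)) b ↔ b = none ∨ ∃ j : Fin (d-1), b = some (i, some j) := by
  simp only [balancedTree, SimpleGraph.fromRel_adj]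
  aesop

lemma bt_adj_leaf (d : ℕ) (i : Fin d) (j : Fin (d-1)) (b) :
    (balancedTree d).Adj (some (i, some j)) b ↔ b = some (i, none) := by
  simp only [balancedTree, SimpleGraph.fromRel_adj]
  aesop

lemma bt_deg_root (d : ℕ) : (balancedTree d).degree none = d := by
  classical
  rw [SimpleGraph.degree, SimpleGraph.neighborFinset_eq_filter]
  have : (univ.filter ((balancedTree d).Adj none)) =
      univ.image (fun i : Fin d => (some (i, none) : Option (Fin d × Option (Fin (d-1))))) := by
    ext b; simp [bt_adj_root, eq_comm]
  rw [this, Finset.card_image_of_injective _ (by intro a b h; simpa using h)]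
  simp

lemma bt_deg_mid (d : ℕ) (hd : 1 ≤ d) (i : Fin d) : (balancedTree d).degree (some (i, none)) = d := by
  classical
  rw [SimpleGraph.degree, SimpleGraph.neighborFinset_eq_filter]
  have : (univ.filter ((balancedTree d).Adj (some (i, none)))) =
      insert none (univ.image (fun j : Fin (d-1) =>
        (some (i, some j) : Option (Fin d × Option (Fin (d-1)))))) := by
    ext b; simp [bt_adj_mid, eq_comm]
  rw [this, Finset.card_insert_of_notMem (by simp),
    Finset.card_image_of_injective _ (by intro a b h; simpa using h)]
  simp [Nat.sub_add_cancel hd]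

lemma bt_deg_leaf (d : ℕ) (i : Fin d) (j : Fin (d-1)) :
    (balancedTree d).degree (some (i, some j)) = 1 := by
  classical
  rw [SimpleGraph.degree, SimpleGraph.neighborFinset_eq_filter]
  have : (univ.filter ((balancedTree d).Adj (some (i, some j)))) = {some (i, none)} := by
    ext b; simp [bt_adj_leaf]
  rw [this]; simp

/-- Observation 2, computation: for the balanced `d`-regular tree of
depth 2 with `d = ⌊1/ρ⌋ + 1`, we have `h_ρ(G) = d`. -/
theorem balanced_tree_min_contagious (d : ℕ) (hd : 2 ≤ d) (ρ : ℝ)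
    (hρ : ρ ∈ Set.Ioc (0 : ℝ) 1) (hdρ : d = ⌊1 / ρ⌋₊ + 1) :
    minContagious (balancedTree d) ρ = d := by
  classical
  obtain ⟨hρ0, hρ1⟩ := hρ
  -- threshold facts
  have hinv : (1:ℝ)/ρ < d := by
    rw [hdρ]; push_cast; exact Nat.lt_floor_add_one _
  have h1d : (1:ℝ) < ρ * d := by
    rw [div_lt_iff₀ hρ0] at hinv
    linarith [hinv]
  have hdd : ρ * (d:ℝ) ≤ d := by
    nlinarith [Nat.cast_nonneg (α := ℝ) d]
  -- the tier-2 set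
  set A₀ : Finset (Option (Fin d × Option (Fin (d-1)))) :=
    univ.image (fun i : Fin d => some (i, none)) with hA₀
  have hA₀card : A₀.card = d := by
    rw [hA₀, Finset.card_image_of_injective _ (by intro a b h; simpa using h)]
    simp
  have hA₀mem : ∀ v, v ∈ A₀ ↔ ∃ i : Fin d, v = some (i, none) := by
    intro v; simp [hA₀, eq_comm]
  -- A₀ is contagious in one step
  have hstep : percStep (balancedTree d)
      (fun v => ρ * ((balancedTree d).degree v : ℝ)) A₀ = univ := by
    apply Finset.eq_univ_iff_forall.mpr
    intro v
    simp only [percStep, Finset.mem_union, Finset.mem_filter, Finset.mem_univ, true_and]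
    match v with
    | none =>
      refine Or.inr ?_
      have hfil : (A₀.filter fun u => (balancedTree d).Adj none u) = A₀ := by
        ext u
        simp only [Finset.mem_filter, and_iff_left_iff_imp]
        intro hu
        obtain ⟨i, rfl⟩ := (hA₀mem u).mp hu
        exact (bt_adj_root d _).mpr ⟨i, rfl⟩
      rw [hfil, hA₀card]
      simpa only [bt_deg_root] using hdd
    | some (i, none) =>
      exact Or.inl ((hA₀mem _).mpr ⟨i, rfl⟩)
    | some (i, some j) =>
      refine Or.inr ?_
      have hfil : (A₀.filter fun u => (balancedTree d).Adj (some (i, some j)) u)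
          = {some (i, none)} := by
        ext u
        simp only [Finset.mem_filter, Finset.mem_singleton, bt_adj_leaf]
        constructor
        · rintro ⟨-, h⟩; exact h
        · rintro rfl; exact ⟨(hA₀mem _).mpr ⟨i, rfl⟩, rfl⟩
      rw [hfil]
      simp only [bt_deg_leaf, Finset.card_singleton, Nat.cast_one, mul_one]
      exact hρ1
  have hA₀cont : Contagious (balancedTree d)
      (fun v => ρ * ((balancedTree d).degree v : ℝ)) A₀ := ⟨1, by simpa using hstep⟩
  -- lower bound: any contagious set has card ≥ d
  have hlb : ∀ A : Finset (Option (Fin d × Option (Fin (d-1)))),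
      Contagious (balancedTree d) (fun v => ρ * ((balancedTree d).degree v : ℝ)) A
        → d ≤ A.card := by
    intro A ⟨m, hm⟩
    have hmeet : ∀ i : Fin d, ∃ o : Option (Fin (d-1)), some (i, o) ∈ A := by
      intro i
      by_contra hc
      push_neg at hc
      have hiter : ∀ n, ∀ o : Option (Fin (d-1)), some (i, o) ∉
          (percStep (balancedTree d) (fun v => ρ * ((balancedTree d).degree v : ℝ)))^[n] A := by
        intro n
        induction n with
        | zero => simpa using hc
        | succ n ih =>
          intro o
          rw [Function.iterate_succ_apply']
          set B := (percStep (balancedTree d)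
            (fun v => ρ * ((balancedTree d).degree v : ℝ)))^[n] A with hB
          simp only [percStep, Finset.mem_union, Finset.mem_filter, Finset.mem_univ, true_and]
          push_neg
          refine ⟨ih o, ?_⟩
          match o with
          | none =>
            have hsub : (B.filter fun u => (balancedTree d).Adj (some (i, none)) u)
                ⊆ {none} := by
              intro u hu
              rw [Finset.mem_filter] at hu
              obtain ⟨huB, hadj⟩ := hu
              rcases (bt_adj_mid d i u).mp hadj with rfl | ⟨j, rfl⟩
              · exact Finset.mem_singleton_self _
              · exact absurd huB (ih (some j))
            have hcard : ((B.filter fun u =>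
                (balancedTree d).Adj (some (i, none)) u).card : ℝ) ≤ 1 :=
              by exact_mod_cast Finset.card_le_card hsub
            simp only [bt_deg_mid d (by omega : 1 ≤ d) i, not_le]
            exact lt_of_le_of_lt hcard h1d
          | some j =>
            have hemp : (B.filter fun u => (balancedTree d).Adj (some (i, some j)) u) = ∅ := by
              ext u
              simp only [Finset.mem_filter, Finset.notMem_empty, iff_false, not_and]
              intro huB hadj
              rw [bt_adj_leaf] at hadj
              subst hadj
              exact ih none huB
            rw [hemp]
            simp only [bt_deg_leaf, Nat.cast_one, mul_one, Finset.card_empty,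
              Nat.cast_zero, not_le]
            exact hρ0
      have := hiter m none
      rw [hm] at this
      exact this (Finset.mem_univ _)
    choose f hf using hmeet
    have hinj : Set.InjOn (fun i : Fin d => (some (i, f i) : Option (Fin d × Option (Fin (d-1)))))
        ↑(univ : Finset (Fin d)) := by
      intro a _ b _ h
      simpa using (Prod.mk.injEq _ _ _ _ ▸ (Option.some.inj h)).1
    calc d = (univ : Finset (Fin d)).card := by simp
    _ ≤ A.card := Finset.card_le_card_of_injOn _ (fun i _ => hf i) hinj
  -- conclude
  have hmem : d ∈ {k | ∃ A : Finset (Option (Fin d × Option (Fin (d-1)))),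
      A.card = k ∧ Contagious (balancedTree d)
        (fun v => ρ * ((balancedTree d).degree v : ℝ)) A} :=
    ⟨A₀, hA₀card, hA₀cont⟩
  apply le_antisymm
  · exact Nat.sInf_le hmem
  · apply le_csInf ⟨d, hmem⟩
    rintro k ⟨A, rfl, hA⟩
    exact hlb A hA
end

section
/- For every ρ ∈ (0,1] and every tree T of order n ≥ 1/ρ, h_ρ(T) ≤ ρn. -/
open Finset
open scoped Classical

variable {V : Type*}

namespace GR
set_option linter.unusedSectionVars false

variable (T : SimpleGraph V) (ρ : ℝ)

noncomputable def degS (S : Finset V) (v : V) : ℕ := (S.filter fun u => T.Adj v u).card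

noncomputable def relStep (S A : Finset V) : Finset V :=
  A ∪ S.filter fun v => ρ * (degS T S v : ℝ) ≤ ((A.filter fun u => T.Adj v u).card : ℝ)

def Reach (S : Finset V) (x y : V) : Prop :=
  ∃ w : T.Walk x y, ∀ z ∈ w.support, z ∈ S

noncomputable def dS (S : Finset V) (x y : V) : ℕ :=
  sInf {n | ∃ w : T.Walk x y, (∀ z ∈ w.support, z ∈ S) ∧ w.length = n}

variable {T ρ}

lemma Reach.refl {S : Finset V} {x : V} (hx : x ∈ S) : Reach T S x x :=
  ⟨.nil, by simpa using hx⟩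

lemma Reach.mem_left {S : Finset V} {x y : V} (h : Reach T S x y) : x ∈ S := by
  obtain ⟨w, hw⟩ := h; exact hw _ w.start_mem_support

lemma Reach.mem_right {S : Finset V} {x y : V} (h : Reach T S x y) : y ∈ S := by
  obtain ⟨w, hw⟩ := h; exact hw _ w.end_mem_support

lemma Reach.symm {S : Finset V} {x y : V} (h : Reach T S x y) : Reach T S y x := by
  obtain ⟨w, hw⟩ := h
  exact ⟨w.reverse, by simpa [SimpleGraph.Walk.support_reverse] using hw⟩

lemma Reach.trans {S : Finset V} {x y z : V} (h : Reach T S x y) (h' : Reach T S y z) :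
    Reach T S x z := by
  obtain ⟨w, hw⟩ := h; obtain ⟨w', hw'⟩ := h'
  refine ⟨w.append w', fun a ha => ?_⟩
  rcases (SimpleGraph.Walk.mem_support_append_iff _ _).1 ha with h | h
  · exact hw _ h
  · exact hw' _ h

lemma Reach.dS_exists {S : Finset V} {x y : V} (h : Reach T S x y) :
    ∃ w : T.Walk x y, (∀ z ∈ w.support, z ∈ S) ∧ w.length = dS T S x y := by
  obtain ⟨w, hw⟩ := h
  exact Nat.sInf_mem (⟨w.length, w, hw, rfl⟩ : {n | ∃ w : T.Walk x y,
    (∀ z ∈ w.support, z ∈ S) ∧ w.length = n}.Nonempty)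

lemma dS_le {S : Finset V} {x y : V} (w : T.Walk x y) (hw : ∀ z ∈ w.support, z ∈ S) :
    dS T S x y ≤ w.length := Nat.sInf_le ⟨w, hw, rfl⟩

lemma dS_self {S : Finset V} {x : V} (hx : x ∈ S) : dS T S x x = 0 :=
  Nat.le_zero.1 (dS_le SimpleGraph.Walk.nil (by simpa using hx))

/-- if `z` is separated from `x` by removing `u`, then the `S`-distance to `z`
exceeds that to `u`. -/
lemma dist_split {S : Finset V} {x u z : V} (hz : z ≠ u)
    (hreach : Reach T S x z) (hsep : ¬ Reach T (S.erase u) x z) :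
    dS T S x u + 1 ≤ dS T S x z := by
  obtain ⟨w, hw, hwlen⟩ := hreach.dS_exists
  have humem : u ∈ w.support := by
    by_contra hu
    exact hsep ⟨w, fun a ha => Finset.mem_erase.2 ⟨fun h => hu (h ▸ ha), hw a ha⟩⟩
  have h1 : dS T S x u ≤ (w.takeUntil u humem).length :=
    dS_le _ fun a ha => hw a (SimpleGraph.Walk.support_takeUntil_subset w humem ha)
  have h2 : 1 ≤ (w.dropUntil u humem).length := by
    by_contra h
    have h0 : (w.dropUntil u humem).length = 0 := by omega
    exact hz (SimpleGraph.Walk.eq_of_length_eq_zero h0).symm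
  have h3 : (w.takeUntil u humem).length + (w.dropUntil u humem).length = w.length := by
    have h := congrArg SimpleGraph.Walk.length (w.take_spec humem)
    rwa [SimpleGraph.Walk.length_append] at h
  omega

/-- two distinct neighbours of `u` cannot be joined avoiding `u` in an acyclic graph -/
lemma nbr_unique (hacyc : T.IsAcyclic) {S' : Finset V} {u x y : V} (huS' : u ∉ S')
    (hx : x ∈ S') (hy : y ∈ S') (hxadj : T.Adj u x) (hyadj : T.Adj u y)
    (hreach : Reach T S' x y) : x = y := by
  by_contra hne
  obtain ⟨w, hw⟩ := hreach
  have hup1 : u ∉ w.bypass.support := fun h =>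
    huS' (hw u (SimpleGraph.Walk.support_bypass_subset w h))
  have hxu : x ≠ u := fun h => huS' (h ▸ hx)
  have hyu : y ≠ u := fun h => huS' (h ▸ hy)
  set p2 : T.Walk x y := SimpleGraph.Walk.cons hxadj.symm (SimpleGraph.Walk.cons hyadj .nil)
    with hp2def
  have hp2 : p2.IsPath := by
    rw [SimpleGraph.Walk.isPath_def]
    simp [hp2def, hxu, hne, hyu.symm]
  have := hacyc.path_unique ⟨w.bypass, w.bypass_isPath⟩ ⟨p2, hp2⟩
  have : w.bypass = p2 := congrArg Subtype.val this
  rw [this] at hup1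
  exact hup1 (by simp [hp2def])

lemma subset_relStep (S A : Finset V) : A ⊆ relStep T ρ S A := subset_union_left

lemma relStep_subset {S A : Finset V} (h : A ⊆ S) : relStep T ρ S A ⊆ S :=
  union_subset h (filter_subset _ _)

lemma iterate_relStep_subset {S A : Finset V} (h : A ⊆ S) (k : ℕ) :
    (relStep T ρ S)^[k] A ⊆ S := by
  induction k with
  | zero => simpa using h
  | succ k ih => rw [Function.iterate_succ_apply']; exact relStep_subset ih

lemma mem_relStep_of_le {S A : Finset V} {v : V} (hv : v ∈ S)
    (h : ρ * (degS T S v : ℝ) ≤ ((A.filter fun u => T.Adj v u).card : ℝ)) :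
    v ∈ relStep T ρ S A :=
  mem_union_right _ (mem_filter.2 ⟨hv, h⟩)

/-- simulation step: a relStep on `S'` is dominated by a relStep on `S` once `u` is infected. -/
lemma sim_step (hρ0 : 0 ≤ ρ) (hρ1 : ρ ≤ 1) {S S' B C : Finset V} {u : V}
    (hS' : S' ⊆ S) (huS' : u ∉ S')
    (hedge : ∀ v ∈ S', ∀ w ∈ S, T.Adj v w → w ∈ S' ∨ w = u)
    (hB : B ⊆ S') (hBC : B ⊆ C) (huC : u ∈ C) :
    relStep T ρ S' B ⊆ relStep T ρ S C := by
  intro v hv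
  rcases Finset.mem_union.1 hv with hv | hv
  · exact subset_relStep _ _ (hBC hv)
  obtain ⟨hvS', hth⟩ := mem_filter.1 hv
  apply mem_relStep_of_le (hS' hvS')
  have hBsub : B.filter (fun z => T.Adj v z) ⊆ C.filter (fun z => T.Adj v z) :=
    filter_subset_filter _ hBC
  by_cases hadj : T.Adj v u
  · have hdeg : (degS T S v : ℝ) ≤ (degS T S' v : ℝ) + 1 := by
      have : S.filter (fun w => T.Adj v w) ⊆ insert u (S'.filter fun w => T.Adj v w) := by
        intro w hw
        obtain ⟨hwS, hwadj⟩ := mem_filter.1 hw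
        rcases hedge v hvS' w hwS hwadj with h | h
        · exact mem_insert_of_mem (mem_filter.2 ⟨h, hwadj⟩)
        · simp [h]
      have := card_le_card this
      have h2 := Finset.card_insert_le u (S'.filter fun w => T.Adj v w)
      unfold degS
      push_cast
      have : (S.filter fun w => T.Adj v w).card ≤ (S'.filter fun w => T.Adj v w).card + 1 := by
        omega
      exact_mod_cast this
    have hcard : ((B.filter fun z => T.Adj v z).card : ℝ) + 1
        ≤ ((C.filter fun z => T.Adj v z).card : ℝ) := by
      have hsub : insert u (B.filter fun z => T.Adj v z) ⊆ C.filter fun z => T.Adj v z := by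
        intro w hw
        rcases mem_insert.1 hw with h | h
        · exact h ▸ mem_filter.2 ⟨huC, hadj⟩
        · exact hBsub h
      have hnot : u ∉ B.filter fun z => T.Adj v z := fun h =>
        huS' (hB (mem_filter.1 h).1)
      have := card_le_card hsub
      rw [card_insert_of_notMem hnot] at this
      exact_mod_cast this
    calc ρ * (degS T S v : ℝ) ≤ ρ * ((degS T S' v : ℝ) + 1) := by
          apply mul_le_mul_of_nonneg_left hdeg
          linarith
      _ = ρ * (degS T S' v : ℝ) + ρ := by ring
      _ ≤ ((B.filter fun z => T.Adj v z).card : ℝ) + 1 := by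
          have := hth; exact add_le_add this hρ1
      _ ≤ _ := hcard
  · have hdeg : (degS T S v : ℝ) ≤ (degS T S' v : ℝ) := by
      have : S.filter (fun w => T.Adj v w) ⊆ S'.filter fun w => T.Adj v w := by
        intro w hw
        obtain ⟨hwS, hwadj⟩ := mem_filter.1 hw
        rcases hedge v hvS' w hwS hwadj with h | h
        · exact mem_filter.2 ⟨h, hwadj⟩
        · exact absurd (h ▸ hwadj) hadj
      exact_mod_cast card_le_card this
    calc ρ * (degS T S v : ℝ) ≤ ρ * (degS T S' v : ℝ) := by
          apply mul_le_mul_of_nonneg_left hdeg; linarith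
      _ ≤ ((B.filter fun z => T.Adj v z).card : ℝ) := hth
      _ ≤ _ := by exact_mod_cast card_le_card hBsub
  
lemma sim (hρ0 : 0 ≤ ρ) (hρ1 : ρ ≤ 1) {S S' A : Finset V} {u : V}
    (hS' : S' ⊆ S) (huS' : u ∉ S') (huS : u ∈ S) (hA : A ⊆ S')
    (hedge : ∀ v ∈ S', ∀ w ∈ S, T.Adj v w → w ∈ S' ∨ w = u) (k : ℕ) :
    (relStep T ρ S')^[k] A ⊆ (relStep T ρ S)^[k] (insert u A) ∧
      u ∈ (relStep T ρ S)^[k] (insert u A) := by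
  induction k with
  | zero => simp [Finset.subset_insert]
  | succ k ih =>
    obtain ⟨ih1, ih2⟩ := ih
    rw [Function.iterate_succ_apply', Function.iterate_succ_apply']
    exact ⟨sim_step hρ0 hρ1 hS' huS' hedge (iterate_relStep_subset hA k) ih1 ih2,
      subset_relStep _ _ ih2⟩

/-- boundary edge along a walk. -/
lemma walk_boundary {S B : Finset V} : ∀ {x y : V} (w : T.Walk x y),
    (∀ z ∈ w.support, z ∈ S) → x ∈ B → y ∉ B →
    ∃ v ∈ B, ∃ u ∈ S, u ∉ B ∧ T.Adj v u := by
  intro x y w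
  induction w with
  | nil => intro _ hx hy; exact absurd hx hy
  | @cons a b c h p ih =>
    intro hsup ha hc
    have hbS : b ∈ S := hsup b (by simp)
    by_cases hb : b ∈ B
    · exact ih (fun z hz => hsup z (by simp [hz])) hb hc
    · exact ⟨a, ha, b, hbS, hb, h⟩

/-- Spread lemma: if everything outside `B` is low, `B` percolates `S`. -/
lemma spread {S : Finset V}
    (hconn : ∀ x ∈ S, ∀ y ∈ S, Reach T S x y) :
    ∀ (m : ℕ) (B : Finset V), B ⊆ S → B.Nonempty →
      (∀ v ∈ S, v ∉ B → ρ * (degS T S v : ℝ) ≤ 1) →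
      (S \ B).card ≤ m → ∃ k, (relStep T ρ S)^[k] B = S := by
  intro m
  induction m with
  | zero =>
    intro B hBS _ _ hcard
    refine ⟨0, ?_⟩
    simp only [Function.iterate_zero, id]
    have : S \ B = ∅ := card_eq_zero.1 (Nat.le_zero.1 hcard)
    exact Finset.Subset.antisymm hBS (fun v hv => by
      by_contra hvB
      exact absurd (mem_sdiff.2 ⟨hv, hvB⟩) (by simp [this]))
  | succ m ih =>
    intro B hBS hne hlow hcard
    by_cases hSB : S ⊆ B
    · exact ⟨0, by simpa using Finset.Subset.antisymm hBS hSB⟩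
    · obtain ⟨y, hyS, hyB⟩ := Finset.not_subset.1 hSB
      obtain ⟨x, hxB⟩ := hne
      obtain ⟨w, hw⟩ := hconn x (hBS hxB) y hyS
      obtain ⟨v, hvB, u, huS, huB, hadj⟩ := walk_boundary w hw hxB hyB
      set B' := relStep T ρ S B with hB'
      have hB'S : B' ⊆ S := relStep_subset hBS
      have hBB' : B ⊆ B' := subset_relStep _ _
      have huB' : u ∈ B' := by
        refine mem_relStep_of_le huS ?_
        calc ρ * (degS T S u : ℝ) ≤ 1 := hlow u huS huB
        _ ≤ ((B.filter fun z => T.Adj u z).card : ℝ) := by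
            have : v ∈ B.filter fun z => T.Adj u z := mem_filter.2 ⟨hvB, hadj.symm⟩
            have := card_pos.2 ⟨v, this⟩
            exact_mod_cast this
      have hlt : (S \ B').card < (S \ B).card := by
        apply card_lt_card
        constructor
        · exact sdiff_subset_sdiff (le_refl _) hBB'
        · intro hsub
          exact (mem_sdiff.1 (hsub (mem_sdiff.2 ⟨huS, huB⟩))).2 huB'
      have hlow' : ∀ v' ∈ S, v' ∉ B' → ρ * (degS T S v' : ℝ) ≤ 1 :=
        fun v' hv' hv'B => hlow v' hv' (fun h => hv'B (hBB' h))
      obtain ⟨k, hk⟩ := ih B' hB'S ⟨x, hBB' hxB⟩ hlow' (by omega)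
      exact ⟨k + 1, by rw [Function.iterate_succ_apply]; exact hk⟩


/-- KEY LEMMA: every connected subset `S` of a forest has a relative contagious set of
size at most `max 1 (ρ * |S|)`. -/
lemma key (hρ0 : 0 < ρ) (hρ1 : ρ ≤ 1) (hacyc : T.IsAcyclic) :
    ∀ (n : ℕ) (S : Finset V), S.card ≤ n → S.Nonempty →
      (∀ x ∈ S, ∀ y ∈ S, Reach T S x y) →
      ∃ A : Finset V, A ⊆ S ∧ ((A.card : ℝ) ≤ max 1 (ρ * S.card)) ∧
        ∃ k, (relStep T ρ S)^[k] A = S := by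
  intro n
  induction n with
  | zero =>
    intro S hcard hne
    exact absurd (card_eq_zero.1 (Nat.le_zero.1 hcard)) (nonempty_iff_ne_empty.1 hne)
  | succ n ih =>
    intro S hcard hne hconn
    -- helper to conclude from a single vertex when everything else is low
    have single : ∀ u ∈ S, (∀ v ∈ S, v ≠ u → ρ * (degS T S v : ℝ) ≤ 1) →
        ∃ A : Finset V, A ⊆ S ∧ ((A.card : ℝ) ≤ max 1 (ρ * S.card)) ∧
          ∃ k, (relStep T ρ S)^[k] A = S := by
      intro u huS hlow
      refine ⟨{u}, by simpa using huS, by simp, ?_⟩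
      refine spread hconn (S \ {u}).card {u} (by simpa using huS) ⟨u, by simp⟩ ?_ le_rfl
      intro v hv hvB
      exact hlow v hv (by simpa using hvB)
    by_cases hSH : ∃ x₀ ∈ S, 1 < ρ * (degS T S x₀ : ℝ)
    · obtain ⟨x₀, hx₀S, hx₀H⟩ := hSH
      set SH := S.filter (fun v => 1 < ρ * (degS T S v : ℝ)) with hSHdef
      have hSHne : SH.Nonempty := ⟨x₀, mem_filter.2 ⟨hx₀S, hx₀H⟩⟩
      obtain ⟨u, huSH, hmax⟩ := Finset.exists_max_image SH (fun v => dS T S x₀ v) hSHne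
      have huS : u ∈ S := (mem_filter.1 huSH).1
      have huH : 1 < ρ * (degS T S u : ℝ) := (mem_filter.1 huSH).2
      by_cases hall : ∀ v ∈ S, v ≠ u → ρ * (degS T S v : ℝ) ≤ 1
      · exact single u huS hall
      · push_neg at hall
        obtain ⟨z, hzS, hzu, hzH⟩ := hall
        have hzSH : z ∈ SH := mem_filter.2 ⟨hzS, hzH⟩
        -- u ≠ x₀
        have hux₀ : u ≠ x₀ := by
          intro h
          have h1 : dS T S x₀ z ≤ 0 := by
            have := hmax z hzSH
            rwa [h, dS_self hx₀S] at this
          obtain ⟨w, hw, hwlen⟩ := (hconn x₀ hx₀S z hzS).dS_exists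
          have hw0 : w.length = 0 := by omega
          exact hzu ((h.trans (SimpleGraph.Walk.eq_of_length_eq_zero hw0)).symm)
        -- the component of x₀ in S \ {u}
        set S₀ := S.erase u with hS₀def
        have hx₀S₀ : x₀ ∈ S₀ := mem_erase.2 ⟨fun h => hux₀ h.symm, hx₀S⟩
        set S' := S₀.filter (fun v => Reach T S₀ x₀ v) with hS'def
        have hS'S₀ : S' ⊆ S₀ := filter_subset _ _
        have hS'S : S' ⊆ S := hS'S₀.trans (erase_subset _ _)
        have huS' : u ∉ S' := fun h => (mem_erase.1 (hS'S₀ h)).1 rfl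
        have hx₀S' : x₀ ∈ S' := mem_filter.2 ⟨hx₀S₀, Reach.refl hx₀S₀⟩
        -- every high vertex other than u is in S'
        have hcomp : ∀ v ∈ S, v ≠ u → 1 < ρ * (degS T S v : ℝ) → v ∈ S' := by
          intro v hvS hvu hvH
          have hvS₀ : v ∈ S₀ := mem_erase.2 ⟨hvu, hvS⟩
          refine mem_filter.2 ⟨hvS₀, ?_⟩
          by_contra hsep
          have hsplit := dist_split hvu (hconn x₀ hx₀S v hvS) hsep
          have := hmax v (mem_filter.2 ⟨hvS, hvH⟩)
          omega
        have hlow_out : ∀ v ∈ S, v ∉ S' → v ≠ u → ρ * (degS T S v : ℝ) ≤ 1 := by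
          intro v hvS hvS' hvu
          by_contra h
          exact hvS' (hcomp v hvS hvu (lt_of_not_ge h))
        -- edges leaving S' go only to u
        have hedge : ∀ v ∈ S', ∀ w ∈ S, T.Adj v w → w ∈ S' ∨ w = u := by
          intro v hv w hwS hadj
          by_cases hwu : w = u
          · exact Or.inr hwu
          · have hwS₀ : w ∈ S₀ := mem_erase.2 ⟨hwu, hwS⟩
            obtain ⟨hvS₀, hreach⟩ := mem_filter.1 hv
            exact Or.inl (mem_filter.2 ⟨hwS₀, hreach.trans
              ⟨SimpleGraph.Walk.cons hadj .nil, by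
                intro a ha
                simp only [SimpleGraph.Walk.support_cons, SimpleGraph.Walk.support_nil,
                  List.mem_cons, List.mem_singleton] at ha
                rcases ha with h | h | h
                · exact h ▸ hvS₀
                · exact h ▸ hwS₀
                · exact absurd h (by simp)⟩⟩)
        -- S' is connected
        have hconn' : ∀ x ∈ S', ∀ y ∈ S', Reach T S' x y := by
          intro x hx y hy
          obtain ⟨hxS₀, hrx⟩ := mem_filter.1 hx
          obtain ⟨hyS₀, hry⟩ := mem_filter.1 hy
          obtain ⟨w, hw⟩ := hrx.symm.trans hry
          refine ⟨w, fun a ha => ?_⟩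
          refine mem_filter.2 ⟨hw a ha, hrx.trans ⟨w.takeUntil a ha, fun b hb =>
            hw b (SimpleGraph.Walk.support_takeUntil_subset w ha hb)⟩⟩
        -- counting: |S'| + degS u ≤ |S|
        have hcount : S'.card + degS T S u ≤ S.card := by
          set N := S.filter (fun w => T.Adj u w) with hNdef
          have hNone : (N ∩ S').card ≤ 1 := by
            refine card_le_one.2 ?_
            intro a ha b hb
            obtain ⟨haN, haS'⟩ := mem_inter.1 ha
            obtain ⟨hbN, hbS'⟩ := mem_inter.1 hb
            exact nbr_unique hacyc huS' haS' hbS' (mem_filter.1 haN).2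
              (mem_filter.1 hbN).2 (hconn' a haS' b hbS')
          have hNsub : N \ S' ∪ S' ∪ {u} ⊆ S := by
            intro a ha
            rcases mem_union.1 ha with h | h
            · rcases mem_union.1 h with h | h
              · exact (filter_subset _ _) (mem_sdiff.1 h).1
              · exact hS'S h
            · exact (mem_singleton.1 h) ▸ huS
          have hdisj1 : Disjoint (N \ S') S' := sdiff_disjoint
          have hdisj2 : Disjoint (N \ S' ∪ S') ({u} : Finset V) := by
            simp only [disjoint_singleton_right, mem_union, mem_sdiff]
            rintro (⟨h, _⟩ | h)
            · exact ((mem_filter.1 h).2).ne rfl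
            · exact huS' h
          have hcards : (N \ S').card + S'.card + 1 ≤ S.card := by
            have := card_le_card hNsub
            rwa [card_union_of_disjoint hdisj2, card_union_of_disjoint hdisj1,
              card_singleton] at this
          have hNcard : degS T S u ≤ (N \ S').card + 1 := by
            have h1 : N.card ≤ (N \ S').card + (N ∩ S').card := by
              have := card_sdiff_add_card_inter N S'
              omega
            have : degS T S u = N.card := rfl
            omega
          omega
        have hdegu1 : (1 : ℝ) < ρ * (degS T S u : ℝ) := huH
        by_cases hsmall : ρ * (S'.card : ℝ) < 1
        · -- everything except u is low
          refine single u huS ?_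
          intro v hvS hvu
          by_cases hvS' : v ∈ S'
          · -- v's S-neighbours lie in S' ∪ {u} minus v itself
            have hsub : S.filter (fun w => T.Adj v w) ⊆ insert u (S'.erase v) := by
              intro w hw
              obtain ⟨hwS, hwadj⟩ := mem_filter.1 hw
              rcases hedge v hvS' w hwS hwadj with h | h
              · exact mem_insert_of_mem (mem_erase.2 ⟨fun hh => (hh ▸ hwadj).ne rfl, h⟩)
              · simp [h]
            have hdle : degS T S v ≤ S'.card := by
              have h1 := card_le_card hsub
              have h2 := Finset.card_insert_le u (S'.erase v)
              have h3 : (S'.erase v).card = S'.card - 1 := card_erase_of_mem hvS'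
              have h4 : 1 ≤ S'.card := card_pos.2 ⟨v, hvS'⟩
              unfold degS
              omega
            calc ρ * (degS T S v : ℝ) ≤ ρ * (S'.card : ℝ) := by
                  apply mul_le_mul_of_nonneg_left (by exact_mod_cast hdle) hρ0.le
              _ ≤ 1 := hsmall.le
          · exact hlow_out v hvS hvS' hvu
        · push_neg at hsmall
          -- induction on the component S'
          have hS'lt : S'.card < S.card := by
            have hdegu : 1 ≤ degS T S u := by
              by_contra h
              have : degS T S u = 0 := by omega
              rw [this] at hdegu1; norm_num at hdegu1
            omega
          obtain ⟨A', hA'sub, hA'card, k₀, hk₀⟩ :=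
            ih S' (by omega) ⟨x₀, hx₀S'⟩ hconn'
          have hA'card' : (A'.card : ℝ) ≤ ρ * (S'.card : ℝ) := by
            rcases max_cases 1 (ρ * (S'.card : ℝ)) with ⟨h1, h2⟩ | ⟨h1, h2⟩ <;>
              [exact le_trans (h1 ▸ hA'card) hsmall; exact h1 ▸ hA'card]
          refine ⟨insert u A', insert_subset huS (hA'sub.trans hS'S), ?_, ?_⟩
          · have h1 : (insert u A').card ≤ A'.card + 1 := card_insert_le _ _
            have h2 : ρ * (S'.card : ℝ) + ρ * (degS T S u : ℝ) ≤ ρ * (S.card : ℝ) := by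
              have : (S'.card : ℝ) + (degS T S u : ℝ) ≤ (S.card : ℝ) := by
                exact_mod_cast hcount
              nlinarith
            have : ((insert u A').card : ℝ) ≤ (A'.card : ℝ) + 1 := by exact_mod_cast h1
            refine le_max_of_le_right ?_
            linarith
          · -- percolation: first infect S' ∪ {u} by simulation, then spread
            obtain ⟨hsim1, hsim2⟩ := sim hρ0.le hρ1 hS'S huS' huS hA'sub hedge k₀
            set B := (relStep T ρ S)^[k₀] (insert u A') with hBdef
            have hBS : B ⊆ S := iterate_relStep_subset (insert_subset huS (hA'sub.trans hS'S)) k₀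
            have hS'B : S' ⊆ B := hk₀ ▸ hsim1
            have hlowB : ∀ v ∈ S, v ∉ B → ρ * (degS T S v : ℝ) ≤ 1 := by
              intro v hvS hvB
              exact hlow_out v hvS (fun h => hvB (hS'B h)) (fun h => hvB (h ▸ hsim2))
            obtain ⟨k₁, hk₁⟩ := spread hconn (S \ B).card B hBS ⟨u, hsim2⟩ hlowB le_rfl
            exact ⟨k₁ + k₀, by rw [Function.iterate_add_apply]; exact hk₁⟩
    · push_neg at hSH
      obtain ⟨x, hx⟩ := hne
      exact single x hx (fun v hv _ => hSH v hv)

end GR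

/-- Gentner–Rautenbach: for every `ρ ∈ (0,1]` and every tree `T` of
order `n ≥ 1/ρ`, `h_ρ(T) ≤ ρn`. -/


theorem tree_min_contagious_le [Fintype V] (T : SimpleGraph V) (ρ : ℝ)
    (hρ : ρ ∈ Set.Ioc (0 : ℝ) 1) (hT : T.IsTree)
    (hn : 1 / ρ ≤ (Fintype.card V : ℝ)) :
    (minContagious T ρ : ℝ) ≤ ρ * (Fintype.card V : ℝ) := by
  obtain ⟨hρ0, hρ1⟩ := hρ
  have hn1 : (1 : ℝ) ≤ ρ * (Fintype.card V : ℝ) := by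
    rw [div_le_iff₀ hρ0] at hn
    linarith
  have hcardpos : 0 < Fintype.card V := by
    by_contra h
    have h0 : Fintype.card V = 0 := by omega
    rw [h0] at hn
    simp only [Nat.cast_zero] at hn
    have : 0 < 1 / ρ := by positivity
    linarith
  have : Nonempty V := Fintype.card_pos_iff.1 hcardpos
  have hconn : ∀ x ∈ (Finset.univ : Finset V), ∀ y ∈ (Finset.univ : Finset V),
      GR.Reach T Finset.univ x y := by
    intro x _ y _
    exact (hT.isConnected x y).elim fun w => ⟨w, fun z _ => Finset.mem_univ z⟩
  obtain ⟨A, -, hAcard, k, hk⟩ := GR.key hρ0 hρ1 hT.2 (Fintype.card V) Finset.univ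
    (by simp) Finset.univ_nonempty hconn
  have hdeg : ∀ v : V, GR.degS T Finset.univ v = T.degree v := by
    intro v
    unfold GR.degS
    rw [← SimpleGraph.card_neighborFinset_eq_degree]
    congr 1
    ext w
    simp [SimpleGraph.mem_neighborFinset]
  have hfun : GR.relStep T ρ Finset.univ = percStep T (fun v => ρ * (T.degree v : ℝ)) := by
    funext B
    unfold GR.relStep percStep
    simp only [hdeg]
  have hcont : Contagious T (fun v => ρ * (T.degree v : ℝ)) A := ⟨k, by rw [← hfun]; exact hk⟩
  have hmin : minContagious T ρ ≤ A.card := Nat.sInf_le ⟨A, rfl, hcont⟩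
  calc (minContagious T ρ : ℝ) ≤ (A.card : ℝ) := by exact_mod_cast hmin
    _ ≤ max 1 (ρ * ((Finset.univ : Finset V).card : ℝ)) := hAcard
    _ = ρ * (Fintype.card V : ℝ) := by
        rw [Finset.card_univ]
        exact max_eq_right hn1
end

section
/- Let ρ ∈ (0, 1/2) and let G be a connected finite graph. Suppose v ∈ V(G) is such that the set H = H_{ρ,G}(v) of vertices eventually infected by {v} satisfies |H| ≥ 1/(2ρ) and H ≠ V(G). Then every connected component of G − H has more than 1/(2ρ) vertices. -/
open Finset
open scoped Classical

variable {V : Type*}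

/-!
The final infected set `H` is a fixed point of the percolation step, so every vertex outside `H`
has fewer than `ρ · deg` neighbours in `H`. Since `G` is connected, each component `C` of `G - H`
contains a vertex `u` with `m ≥ 1` neighbours in `H`, and all other neighbours of `u` lie in `C`,
so `deg u < m + |C|`. Then `m < ρ (m + |C|)`, which for `m ≥ 1` and `ρ < 1/2` forces
`|C| > 1/(2ρ)`.
-/

theorem Finset.isFixedPt_iterate_card {α : Type*} [Fintype α] {f : Finset α → Finset α}
    (hf : ∀ s, s ⊆ f s) (s : Finset α) : Function.IsFixedPt f (f^[Fintype.card α] s) := by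
  by_contra hfix
  have hstrict : ∀ n ≤ Fintype.card α, f^[n] s ⊂ f^[n + 1] s := by
    intro n hn
    rw [Function.iterate_succ_apply']
    refine (hf _).ssubset_of_ne fun h => hfix ?_
    obtain ⟨k, hk⟩ := Nat.exists_eq_add_of_le hn
    rw [hk, add_comm, Function.iterate_add_apply, Function.iterate_fixed h.symm]
    exact h.symm
  -- a strictly increasing chain of `card α + 2` subsets of `α` cannot exist
  have hgrow : ∀ n ≤ Fintype.card α + 1, n ≤ #(f^[n] s) := by
    intro n hn
    induction n with
    | zero => exact Nat.zero_le _
    | succ n ih => exact (ih (by omega)).trans_lt (card_lt_card (hstrict n (by omega)))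
  exact (hgrow _ le_rfl).not_gt (Nat.lt_succ_of_le (card_le_univ _))

section Percolation

variable [Fintype V] (G : SimpleGraph V) (φ : V → ℝ)

lemma subset_percStep (A : Finset V) : A ⊆ percStep G φ A := subset_union_left

lemma subset_percClosure (A : Finset V) : A ⊆ percClosure G φ A := by
  unfold percClosure
  induction Fintype.card V with
  | zero => exact subset_rfl
  | succ n ih =>
    rw [Function.iterate_succ_apply']
    exact ih.trans (subset_percStep G φ _)

lemma percStep_percClosure (A : Finset V) :
    percStep G φ (percClosure G φ A) = percClosure G φ A :=
  Finset.isFixedPt_iterate_card (subset_percStep G φ) A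

lemma card_filter_adj_lt_of_notMem_percClosure {A : Finset V} {u : V}
    (hu : u ∉ percClosure G φ A) : (#((percClosure G φ A).filter (G.Adj u)) : ℝ) < φ u := by
  by_contra! h
  rw [← percStep_percClosure] at hu
  exact hu (mem_union_right _ (mem_filter.2 ⟨mem_univ u, h⟩))

end Percolation

namespace SimpleGraph

variable {G : SimpleGraph V}

lemma ConnectedComponent.degree_lt_card_supp [Fintype V] (C : G.ConnectedComponent) {v : V}
    (hv : v ∈ C.supp) : G.degree v < Nat.card C.supp := by
  have hsub : insert v (G.neighborFinset v) ⊆ C.supp.toFinset := by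
    intro w hw
    rw [Set.mem_toFinset]
    rcases mem_insert.1 hw with rfl | hadj
    · exact hv
    · exact C.mem_supp_of_adj_mem_supp hv ((G.mem_neighborFinset v w).1 hadj)
  rw [Nat.card_eq_card_toFinset, ← card_neighborFinset_eq_degree]
  have := card_le_card hsub
  rwa [card_insert_of_notMem (G.notMem_neighborFinset_self v)] at this

lemma Connected.exists_mem_supp_adj_notMem (hG : G.Connected) {s : Set V} {w : V} (hw : w ∉ s)
    (C : (G.induce s).ConnectedComponent) : ∃ u ∈ C.supp, ∃ x ∉ s, G.Adj u x := by
  obtain ⟨c, hc⟩ := C.nonempty_supp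
  obtain ⟨p⟩ := hG.preconnected c w
  obtain ⟨d, -, ⟨u, huC, hu⟩, hd⟩ :=
    p.exists_boundary_dart (Subtype.val '' C.supp) ⟨c, hc, rfl⟩
      fun ⟨x, _, hx⟩ => hw (hx ▸ x.2)
  have hadj : G.Adj u d.snd := hu ▸ d.adj
  -- an edge leaving `C` inside `s` would stay in `C`
  exact ⟨u, huC, d.snd,
    fun hs => hd ⟨⟨d.snd, hs⟩, C.mem_supp_of_adj_mem_supp huC hadj, rfl⟩, hadj⟩

lemma degree_eq_card_filter_adj_add_degree_induce_compl [Fintype V] (H : Finset V)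
    (u : ({x | x ∉ H} : Set V)) :
    G.degree u = #(H.filter (G.Adj u)) + (G.induce {x | x ∉ H}).degree u := by
  rw [← card_neighborFinset_eq_degree, ← card_neighborFinset_eq_degree,
    ← card_map (s := (G.induce _).neighborFinset u) (.subtype _), map_neighborFinset_induce,
    ← card_filter_add_card_filter_not (· ∈ H)]
  congr 2 <;> ext x <;> simp [and_comm]

end SimpleGraph

theorem components_of_complement_large_general [Fintype V] (G : SimpleGraph V) (ρ : ℝ)
    (hρ₀ : 0 < ρ) (hρ₁ : ρ < 1 / 2) (hG : G.Connected) (v : V) :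
    ∀ C : (G.induce {w : V | w ∉ percClosure G (fun w => ρ * (G.degree w : ℝ)) {v}}).ConnectedComponent,
      1 / (2 * ρ) < (Nat.card C.supp : ℝ) := by
  set H := percClosure G (fun w => ρ * (G.degree w : ℝ)) {v}
  intro C
  have hvH : v ∈ H := subset_percClosure _ _ _ (mem_singleton_self v)
  obtain ⟨u, huC, w, hwH, huw⟩ := hG.exists_mem_supp_adj_notMem (not_not.2 hvH) C
  set m := #(H.filter (G.Adj u))
  have hm : 1 ≤ (m : ℝ) := by
    exact_mod_cast card_pos.2 ⟨w, mem_filter.2 ⟨not_not.1 hwH, huw⟩⟩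
  have hthreshold : (m : ℝ) < ρ * G.degree u := card_filter_adj_lt_of_notMem_percClosure _ _ u.2
  have hdeg : (G.degree u : ℝ) < m + Nat.card C.supp := by
    rw [G.degree_eq_card_filter_adj_add_degree_induce_compl H u]
    exact_mod_cast Nat.add_lt_add_left (C.degree_lt_card_supp huC) m
  -- `m < ρ (m + |C|)`, so `ρ |C| > (1 - ρ) m ≥ 1 - ρ > 1/2`
  rw [div_lt_iff₀ (by positivity)]
  nlinarith

/-- Claim 1 computation: if `H = H_{ρ,G}(v)` satisfies `|H| ≥ 1/(2ρ)`
and `H ≠ V(G)`, then every connected component of `G - H` has more than `1/(2ρ)`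
vertices. -/
theorem components_of_complement_large [Fintype V] (G : SimpleGraph V) (ρ : ℝ)
    (hρ₀ : 0 < ρ) (hρ₁ : ρ < 1 / 2) (hG : G.Connected) (v : V)
    (hH : 1 / (2 * ρ) ≤ ((percClosure G (fun w => ρ * (G.degree w : ℝ)) {v}).card : ℝ))
    (hne : percClosure G (fun w => ρ * (G.degree w : ℝ)) {v} ≠ Finset.univ) :
    ∀ C : (G.induce {w : V | w ∉ percClosure G (fun w => ρ * (G.degree w : ℝ)) {v}}).ConnectedComponent,
      1 / (2 * ρ) < (Nat.card C.supp : ℝ) :=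
  components_of_complement_large_general G ρ hρ₀ hρ₁ hG v
end
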